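/- arXiv:math/0503217 — 10 statements merged into one kernel-verified Lean document; each statement's English description precedes it below -/
import Mathlib

section
/- If L₁ and L₂ are d-derivations of a Lie algebra 𝔤, then the map [L₁,L₂] defined by [L₁,L₂](D) = L₁(ad(L₂(D))) - L₂(ad(L₁(D))) is again a d-derivation of 𝔤. -/
/-!
Since `ad (D x) = ⁅D, ad x⁆`, a `d`-derivation `L` satisfies
`L (ad (D x)) = D (L (ad x)) - ⁅x, L D⁆`. Expanding `[L₁,L₂] ⁅D₁, D₂⁆` with this identity leaves
`D₁ ([L₁,L₂] D₂) - D₂ ([L₁,L₂] D₁)` plus four brackets of the `Lᵢ Dⱼ`, which cancel in pairs by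
antisymmetry.
-/

variable {k : Type*} [Field k] {g : Type*} [LieRing g] [LieAlgebra k g]

/-- A `d`-derivation of `g`: a linear map `L : Der(g) → g` with
`L ⁅D₁, D₂⁆ = D₁ (L D₂) - D₂ (L D₁)`. -/
def IsDDerivation (L : LieDerivation k g g →ₗ[k] g) : Prop :=
  ∀ D₁ D₂ : LieDerivation k g g, L ⁅D₁, D₂⁆ = D₁ (L D₂) - D₂ (L D₁)

/-- The inner `d`-derivation `L_x : D ↦ -D x`. -/
def innerDDer (x : g) : LieDerivation k g g →ₗ[k] g where
  toFun D := -(D x)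
  map_add' := by intros; simp [add_comm]
  map_smul' := by intros; simp

/-- The bracket of `d`-derivations: `[L₁,L₂](D) = L₁(ad(L₂ D)) - L₂(ad(L₁ D))`. -/
def dBracket (L₁ L₂ : LieDerivation k g g →ₗ[k] g) : LieDerivation k g g →ₗ[k] g :=
  L₁ ∘ₗ ((LieDerivation.ad k g : g →ₗ⁅k⁆ LieDerivation k g g) : g →ₗ[k] LieDerivation k g g) ∘ₗ L₂
    - L₂ ∘ₗ ((LieDerivation.ad k g : g →ₗ⁅k⁆ LieDerivation k g g) : g →ₗ[k] LieDerivation k g g) ∘ₗ L₁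

/-- The action of `Der(g)` on `d`-derivations: `D(L) = D ∘ L - L ∘ ad(D)`. -/
def derAct (D : LieDerivation k g g) (L : LieDerivation k g g →ₗ[k] g) :
    LieDerivation k g g →ₗ[k] g :=
  (D : g →ₗ[k] g) ∘ₗ L - L ∘ₗ ((LieAlgebra.ad k (LieDerivation k g g)) D)

/-- The bracket of the full graph `C(g) = Der(g) ⋉ g`. -/
def fgBracket (p q : LieDerivation k g g × g) : LieDerivation k g g × g :=
  (⁅p.1, q.1⁆, p.1 q.2 - q.1 p.2 + ⁅p.2, q.2⁆)

/-- A derivation of the full graph: a linear endomorphism satisfying Leibniz. -/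
def IsFGDerivation (T : (LieDerivation k g g × g) →ₗ[k] (LieDerivation k g g × g)) : Prop :=
  ∀ p q, T (fgBracket p q) = fgBracket (T p) q + fgBracket p (T q)

/-- The derivation `𝔇_{(D,L)}` of the full graph. -/
def fgDer (D : LieDerivation k g g) (L : LieDerivation k g g →ₗ[k] g)
    (p : LieDerivation k g g × g) : LieDerivation k g g × g :=
  (⁅D, p.1⁆, D p.2 + L (LieDerivation.ad k g p.2) + L p.1)

lemma dBracket_apply (L₁ L₂ : LieDerivation k g g →ₗ[k] g) (D : LieDerivation k g g) :
    dBracket L₁ L₂ D = L₁ (LieDerivation.ad k g (L₂ D)) - L₂ (LieDerivation.ad k g (L₁ D)) :=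
  rfl

lemma IsDDerivation.apply_ad_apply {L : LieDerivation k g g →ₗ[k] g} (hL : IsDDerivation L)
    (D : LieDerivation k g g) (x : g) :
    L (LieDerivation.ad k g (D x)) = D (L (LieDerivation.ad k g x)) - ⁅x, L D⁆ := by
  rw [← LieDerivation.lie_der_ad_eq_ad_der, hL, LieDerivation.ad_apply_apply]

theorem stmt1 (L₁ L₂ : LieDerivation k g g →ₗ[k] g)
    (h₁ : IsDDerivation L₁) (h₂ : IsDDerivation L₂) :
    IsDDerivation (dBracket L₁ L₂) := by
  intro D₁ D₂
  simp only [dBracket_apply, h₁ D₁ D₂, h₂ D₁ D₂, map_sub, h₁.apply_ad_apply, h₂.apply_ad_apply]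
  rw [← lie_skew (L₂ D₂) (L₁ D₁), ← lie_skew (L₂ D₁) (L₁ D₂)]
  abel
end

section
/- The set 𝒟 of all d-derivations of a Lie algebra 𝔤, equipped with the bracket [L₁,L₂](D) = L₁(ad(L₂(D))) - L₂(ad(L₁(D))), satisfies the axioms of a Lie algebra (bilinearity, antisymmetry, and the Jacobi identity). -/
variable {k : Type*} [Field k] {g : Type*} [LieRing g] [LieAlgebra k g]

theorem stmt2 (L₁ L₂ L₃ : LieDerivation k g g →ₗ[k] g) (a : k)
    (h₁ : IsDDerivation L₁) (h₂ : IsDDerivation L₂) (h₃ : IsDDerivation L₃) :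
    (dBracket (L₁ + L₂) L₃ = dBracket L₁ L₃ + dBracket L₂ L₃ ∧
      dBracket L₁ (L₂ + L₃) = dBracket L₁ L₂ + dBracket L₁ L₃ ∧
      dBracket (a • L₁) L₂ = a • dBracket L₁ L₂ ∧
      dBracket L₁ (a • L₂) = a • dBracket L₁ L₂) ∧
    dBracket L₁ L₂ = - dBracket L₂ L₁ ∧
    dBracket L₁ (dBracket L₂ L₃) =
      dBracket (dBracket L₁ L₂) L₃ + dBracket L₂ (dBracket L₁ L₃) := by
  refine ⟨⟨?_, ?_, ?_, ?_⟩, ?_, ?_⟩ <;>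
    · ext D
      simp [dBracket, mul_sub, smul_sub, sub_sub_eq_add_sub]
      try abel
end

section
/- For any elements g, h of a Lie algebra 𝔤, the bracket of inner d-derivations satisfies [L_g, L_h] = L_{[g,h]}; that is, the map g ↦ L_g is a Lie algebra homomorphism from 𝔤 to the Lie algebra 𝒟 of d-derivations. -/
variable {k : Type*} [Field k] {g : Type*} [LieRing g] [LieAlgebra k g]

theorem stmt3 (x y : g) :
    (innerDDer ⁅x, y⁆ : LieDerivation k g g →ₗ[k] g) =
      dBracket (innerDDer x) (innerDDer y) := by
  ext D
  simp [innerDDer, dBracket, LieDerivation.apply_lie_eq_add]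
  rw [← lie_skew y (D x), ← lie_skew x (D y)]
  abel
end

section
/- For each derivation D of a Lie algebra 𝔤, the map L ↦ D∘L - L∘ad(D) (where ad(D) denotes the adjoint action of D on Der(𝔤), i.e., D' ↦ [D,D']) sends d-derivations to d-derivations. -/
variable {k : Type*} [Field k] {g : Type*} [LieRing g] [LieAlgebra k g]

theorem stmt6 (D : LieDerivation k g g) (L : LieDerivation k g g →ₗ[k] g)
    (hL : IsDDerivation L) : IsDDerivation (derAct D L) := by
  intro D₁ D₂
  simp only [derAct, LinearMap.sub_apply, LinearMap.comp_apply, LieAlgebra.ad_apply]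
  have h1 : L ⁅D, ⁅D₁, D₂⁆⁆ = L ⁅⁅D, D₁⁆, D₂⁆ + L ⁅D₁, ⁅D, D₂⁆⁆ := by
    rw [← map_add]; congr 1; rw [leibniz_lie]
  rw [h1, hL D₁ D₂, hL ⁅D, D₁⁆ D₂, hL D₁ ⁅D, D₂⁆]
  have hb : ∀ (A B : LieDerivation k g g) (x : g), ⁅A, B⁆ x = A (B x) - B (A x) := by
    intro A B x; simp [LieDerivation.commutator_apply]
  simp only [map_sub, hb, LieDerivation.coeFn_coe]
  abel
end

section
/- The action of Der(𝔤) on the Lie algebra 𝒟 of d-derivations given by D(L) = D∘L - L∘ad(D) is by derivations of 𝒟: for all D ∈ Der(𝔤) and d-derivations L₁, L₂, one has D([L₁,L₂]) = [D(L₁),L₂] + [L₁,D(L₂)]. -/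
variable {k : Type*} [Field k] {g : Type*} [LieRing g] [LieAlgebra k g]

theorem stmt7 (D : LieDerivation k g g) (L₁ L₂ : LieDerivation k g g →ₗ[k] g)
    (h₁ : IsDDerivation L₁) (h₂ : IsDDerivation L₂) :
    derAct D (dBracket L₁ L₂) =
      dBracket (derAct D L₁) L₂ + dBracket L₁ (derAct D L₂) := by
  ext D'
  simp only [derAct, dBracket, LinearMap.sub_apply, LinearMap.add_apply, LinearMap.comp_apply,
    LieHom.coe_toLinearMap, LieAlgebra.ad_apply, map_sub, LieDerivation.coeFn_coe,
    LieDerivation.lie_der_ad_eq_ad_der]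
  abel
end

section
/- The map sending D ∈ Der(𝔤) to the operator L ↦ D∘L - L∘ad(D) on 𝒟 is a Lie algebra homomorphism from Der(𝔤) to Der(𝒟); i.e., [D₁,D₂](L) = D₁(D₂(L)) - D₂(D₁(L)) for all D₁, D₂ ∈ Der(𝔤) and L ∈ 𝒟. -/
variable {k : Type*} [Field k] {g : Type*} [LieRing g] [LieAlgebra k g]

theorem stmt8 (D₁ D₂ : LieDerivation k g g) (L : LieDerivation k g g →ₗ[k] g)
    (hL : IsDDerivation L) :
    derAct ⁅D₁, D₂⁆ L = derAct D₁ (derAct D₂ L) - derAct D₂ (derAct D₁ L) := by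
  have had : (LieAlgebra.ad k (LieDerivation k g g)) ⁅D₁, D₂⁆ =
      ⁅LieAlgebra.ad k (LieDerivation k g g) D₁, LieAlgebra.ad k (LieDerivation k g g) D₂⁆ := by
    simp
  ext D
  simp only [derAct, had, LinearMap.sub_apply, LinearMap.comp_apply, LieHom.lie_apply,
    LieDerivation.lie_apply, LinearMap.map_sub, map_sub, LieRing.of_associative_ring_bracket, LieDerivation.coeFn_coe, Module.End.mul_apply]
  abel
end

section
/- For each pair (D,L) with D ∈ Der(𝔤) and L a d-derivation of 𝔤, the map 𝔇_{(D,L)} : C(𝔤) → C(𝔤) defined by 𝔇_{(D,L)}(D₁,g) = ([D,D₁], D(g) + L(ad(g)) + L(D₁)) is a derivation of the full graph C(𝔤). -/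
variable {k : Type*} [Field k] {g : Type*} [LieRing g] [LieAlgebra k g]

/-
`𝔇_{(D,L)}` splits as the inner derivation `ad (D, 0)` of `C(g)` plus `p ↦ (0, L (π p))`, where
`π (D₁, x) = D₁ + ad x` (`fgProj`) is a Lie algebra morphism `C(g) → Der(g)`. For the second
summand the Leibniz rule, read through `π`, is exactly the defining identity of a `d`-derivation.
-/

lemma LieDerivation.ad_apply_eq_lie {R L : Type*} [CommRing R] [LieRing L] [LieAlgebra R L]
    (D : LieDerivation R L L) (x : L) :
    LieDerivation.ad R L (D x) = ⁅D, LieDerivation.ad R L x⁆ := by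
  rw [LieDerivation.ad_apply_lieDerivation, ← LieDerivation.lie_ad, ← lie_skew, neg_neg]

def fgProj : (LieDerivation k g g × g) →ₗ[k] LieDerivation k g g :=
  LinearMap.fst k _ _ + (LieDerivation.ad k g : g →ₗ[k] LieDerivation k g g) ∘ₗ LinearMap.snd k _ _

lemma fgProj_apply (p : LieDerivation k g g × g) : fgProj p = p.1 + LieDerivation.ad k g p.2 :=
  rfl

lemma fgProj_fgBracket (p q : LieDerivation k g g × g) :
    fgProj (fgBracket p q) = ⁅fgProj p, fgProj q⁆ := by
  simp only [fgProj_apply, fgBracket, map_add, map_sub, LieHom.map_lie,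
    LieDerivation.ad_apply_eq_lie, add_lie, lie_add, ← lie_skew q.1 (LieDerivation.ad k g p.2)]
  abel

lemma fgBracket_add_left (p p' q : LieDerivation k g g × g) :
    fgBracket (p + p') q = fgBracket p q + fgBracket p' q := by
  refine Prod.ext (add_lie _ _ _) ?_
  simp only [fgBracket, Prod.fst_add, Prod.snd_add, add_lie, map_add, LieDerivation.add_apply]
  abel

lemma fgBracket_add_right (p q q' : LieDerivation k g g × g) :
    fgBracket p (q + q') = fgBracket p q + fgBracket p q' := by
  refine Prod.ext (lie_add _ _ _) ?_
  simp only [fgBracket, Prod.fst_add, Prod.snd_add, lie_add, map_add, LieDerivation.add_apply]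
  abel

lemma fgBracket_leibniz (r p q : LieDerivation k g g × g) :
    fgBracket r (fgBracket p q) = fgBracket (fgBracket r p) q + fgBracket p (fgBracket r q) := by
  refine Prod.ext ?_ ?_
  · exact leibniz_lie r.1 p.1 q.1
  · simp only [fgBracket, Prod.snd_add, map_add, map_sub, LieDerivation.lie_apply,
      LieDerivation.apply_lie_eq_add, lie_add, lie_sub, add_lie, sub_lie, leibniz_lie r.2,
      ← lie_skew (q.1 r.2) p.2]
    abel

lemma IsDDerivation.leibniz_comp_fgProj {L : LieDerivation k g g →ₗ[k] g} (hL : IsDDerivation L)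
    (p q : LieDerivation k g g × g) :
    ((0 : LieDerivation k g g), L (fgProj (fgBracket p q))) =
      fgBracket (0, L (fgProj p)) q + fgBracket p (0, L (fgProj q)) := by
  refine Prod.ext ?_ ?_
  · simp [fgBracket]
  · rw [fgProj_fgBracket, hL]
    simp only [fgBracket, fgProj_apply, LieDerivation.add_apply, LieDerivation.ad_apply_apply,
      Prod.snd_add, LieDerivation.coe_zero, Pi.zero_apply, zero_sub, sub_zero,
      ← lie_skew (L (p.1 + LieDerivation.ad k g p.2)) q.2]
    abel

lemma fgDer_eq (D : LieDerivation k g g) (L : LieDerivation k g g →ₗ[k] g)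
    (p : LieDerivation k g g × g) :
    fgDer D L p = fgBracket (D, 0) p + (0, L (fgProj p)) := by
  refine Prod.ext (add_zero _).symm ?_
  simp only [fgDer, fgBracket, fgProj_apply, map_zero, sub_zero, zero_lie, add_zero,
    Prod.snd_add, map_add]
  abel

lemma isLinearMap_fgDer (D : LieDerivation k g g) (L : LieDerivation k g g →ₗ[k] g) :
    IsLinearMap k (fgDer D L) := by
  refine ⟨fun p q ↦ Prod.ext (lie_add _ _ _) ?_, fun c p ↦ Prod.ext (lie_smul _ _ _) ?_⟩
  · simp only [fgDer, Prod.snd_add, Prod.fst_add, map_add]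
    abel
  · simp only [fgDer, Prod.smul_snd, Prod.smul_fst, map_smul, smul_add]

theorem stmt10 (D : LieDerivation k g g) (L : LieDerivation k g g →ₗ[k] g)
    (hL : IsDDerivation L) :
    IsLinearMap k (fgDer D L) ∧
    ∀ p q : LieDerivation k g g × g,
      fgDer D L (fgBracket p q) =
        fgBracket (fgDer D L p) q + fgBracket p (fgDer D L q) := by
  refine ⟨isLinearMap_fgDer D L, fun p q ↦ ?_⟩
  simp only [fgDer_eq, fgBracket_add_left, fgBracket_add_right, fgBracket_leibniz (D, 0),
    hL.leibniz_comp_fgProj p q]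
  abel
end

section
/- The homomorphism (D,L) ↦ 𝔇_{(D,L)} from ℋ = Der(𝔤) ⋉ 𝒟 to the derivation algebra of the full graph C(𝔤) is injective: 𝔇_{(D,L)} = 0 if and only if D = 0 and L = 0. -/
variable {k : Type*} [Field k] {g : Type*} [LieRing g] [LieAlgebra k g]

theorem stmt12 (D : LieDerivation k g g) (L : LieDerivation k g g →ₗ[k] g)
    (hL : IsDDerivation L) :
    (∀ p : LieDerivation k g g × g, fgDer D L p = 0) ↔ D = 0 ∧ L = 0 := by
  constructor
  · intro h
    have hLz : L = 0 := by
      ext D₁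
      have := h (D₁, 0)
      simp [fgDer, Prod.ext_iff] at this
      simpa using this.2
    refine ⟨?_, hLz⟩
    ext x
    have := h (0, x)
    simp [fgDer, hLz, Prod.ext_iff] at this
    simpa using this
  · rintro ⟨rfl, rfl⟩ p
    simp [fgDer, Prod.ext_iff]
end

section
/- If 𝔇 = (T₁,T₂) is a derivation of the full graph C(𝔤), then the restriction of T₂ to the subspace (Der(𝔤),0) is a d-derivation of 𝔤, i.e., the map L(D) = T₂(D,0) satisfies L([D₁,D₂]) = D₁(L(D₂)) - D₂(L(D₁)). -/
variable {k : Type*} [Field k] {g : Type*} [LieRing g] [LieAlgebra k g]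

theorem stmt15 (T : (LieDerivation k g g × g) →ₗ[k] (LieDerivation k g g × g))
    (hT : IsFGDerivation T) :
    ∀ D₁ D₂ : LieDerivation k g g,
      (T (⁅D₁, D₂⁆, 0)).2 = D₁ ((T (D₂, 0)).2) - D₂ ((T (D₁, 0)).2) := by
  intro D₁ D₂
  have h := hT (D₁, 0) (D₂, 0)
  simp [fgBracket] at h
  have h2 := congrArg Prod.snd h
  simp at h2
  rw [h2]; abel
end

section
/- If the d-center C_d(𝔤) of a Lie algebra 𝔤 is trivial, then 𝔤 embeds as a Lie subalgebra of the Lie algebra 𝒟 of d-derivations via g ↦ L_g, where L_g(D) = -D(g). -/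
variable {k : Type*} [Field k] {g : Type*} [LieRing g] [LieAlgebra k g]

theorem stmt19
    (hC : ∀ x : g, (∀ D : LieDerivation k g g, D x = 0) → x = 0) :
    IsLinearMap k (innerDDer : g → (LieDerivation k g g →ₗ[k] g)) ∧
    Function.Injective (innerDDer : g → (LieDerivation k g g →ₗ[k] g)) ∧
    (∀ x : g, IsDDerivation (innerDDer x : LieDerivation k g g →ₗ[k] g)) ∧
    (∀ x y : g, (innerDDer ⁅x, y⁆ : LieDerivation k g g →ₗ[k] g) =
      dBracket (innerDDer x) (innerDDer y)) := by
  refine ⟨⟨?_, ?_⟩, ?_, ?_, ?_⟩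
  · intro x y; ext D; simp [innerDDer]; abel
  · intro c x; ext D; simp [innerDDer]
  · intro x y hxy
    have h : ∀ D : LieDerivation k g g, D (x - y) = 0 := by
      intro D
      have := congrArg (fun L => L D) hxy
      simp [innerDDer] at this
      simp [this]
    exact sub_eq_zero.mp (hC _ h)
  · intro x D₁ D₂
    simp [innerDDer, LieDerivation.lie_apply]
    abel
  · intro x y
    ext D
    simp [innerDDer, dBracket, LieDerivation.ad_apply_apply, LieDerivation.apply_lie_eq_add]
    rw [← lie_skew y (D x), ← lie_skew x (D y)]
    abel
end
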